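/- arXiv:2304.04501 — 3 statements merged into one kernel-verified Lean document; each statement's English description precedes it below -/
import Mathlib

section
/- Let R be an associative unital algebra over ℚ and let A = (a_{ij}) be an n×n Manin matrix with entries in R. For k ≥ 1 set T_k = tr(A^k), and define σ_0, σ_1, …, σ_n ∈ R by the identity cdet(1 + αA) = ∑_{k=0}^{n} σ_k α^k in the polynomial ring R[α] (α a central variable). Then for every k = 1, …, n the Newton identity σ_k = ((−1)^{k+1}/k) · ∑_{i=0}^{k−1} (−1)^i σ_i T_{k−i} holds. -/
/-!
Put `P(α) = cdet (1 + α A)`. Permuting the columns of a Manin matrix multiplies `cdet` by the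
sign (for an adjacent transposition the paired terms cancel by the Manin relation), so over a
`ℚ`-algebra a Manin matrix with two equal columns has `cdet` zero. Moving column `i` to the end
and expanding along the last column gives a left adjugate `G` with `G (1 + α A) = P • 1`, and
Leibniz's rule gives `P' = tr (G A)`, since differentiating one column of `1 + α A` keeps it
Manin. Writing `G = P ∑_{q ≤ k} (-α A)^q + G (-α A)^(k+1)` and comparing coefficients of
`α^(k-1)` in `P' = tr (G A)` gives `k σ_k = ∑_{i < k} (-1)^(k-1-i) σ_i T_(k-i)`.
-/

/-- The column determinant of a square matrix with possibly noncommuting entries: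
`cdet A = ∑_{σ ∈ S_n} sign(σ) · a_{σ(1)1} a_{σ(2)2} ⋯ a_{σ(n)n}`. -/
noncomputable def cdet {n : ℕ} {R : Type*} [Ring R] (A : Matrix (Fin n) (Fin n) R) : R :=
  ∑ σ : Equiv.Perm (Fin n),
    ((Equiv.Perm.sign σ : ℤ) • ((List.finRange n).map fun i => A (σ i) i).prod)

/-- A square matrix `A` over an associative unital ring is a Manin matrix if
`[a_{ij}, a_{pq}] = [a_{pj}, a_{iq}]` for all indices. -/
def IsManinMatrix {n : ℕ} {R : Type*} [Ring R] (A : Matrix (Fin n) (Fin n) R) : Prop :=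
  ∀ i j p q, A i j * A p q - A p q * A i j = A p j * A i q - A i q * A p j

section Central

variable {S : Type*} [Ring S]

theorem commutator_central_add_mul_central {e e' c c' : S} (x y : S) (he : ∀ z, Commute e z)
    (he' : ∀ z, Commute e' z) (hc : ∀ z, Commute c z) (hc' : ∀ z, Commute c' z) :
    (e + x * c) * (e' + y * c') - (e' + y * c') * (e + x * c) = (x * y - y * x) * (c * c') := by
  have hxy : x * c * (y * c') = x * y * (c * c') := by
    rw [mul_assoc, ← mul_assoc c, (hc y).eq, mul_assoc, mul_assoc]
  have hyx : y * c' * (x * c) = y * x * (c * c') := by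
    rw [mul_assoc, ← mul_assoc c', (hc' x).eq, mul_assoc, mul_assoc, (hc' c).eq]
  simp only [add_mul, mul_add, hxy, hyx, (he e').eq, (he (y * c')).eq, (he' (x * c)).eq, sub_mul]
  abel

end Central

namespace IsManinMatrix

variable {S : Type*} [Ring S] {n : ℕ} {W : Matrix (Fin n) (Fin n) S}

theorem submatrix (hW : IsManinMatrix W) (f g : Fin n → Fin n) :
    IsManinMatrix (W.submatrix f g) :=
  fun i j p q => hW (f i) (g j) (f p) (g q)

theorem map {T : Type*} [Ring T] (hW : IsManinMatrix W) (φ : S →+* T) :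
    IsManinMatrix (W.map φ) := by
  intro i j p q
  simp only [Matrix.map_apply, ← map_mul, ← map_sub, hW i j p q]

theorem central_add_mul_diagonal (hW : IsManinMatrix W) {E : Matrix (Fin n) (Fin n) S}
    {c : Fin n → S} (hE : ∀ i j z, Commute (E i j) z) (hc : ∀ j z, Commute (c j) z) :
    IsManinMatrix (E + W * Matrix.diagonal c) := by
  intro i j p q
  simp only [Matrix.add_apply, Matrix.mul_diagonal]
  rw [commutator_central_add_mul_central _ _ (hE i j) (hE p q) (hc j) (hc q),
    commutator_central_add_mul_central _ _ (hE p j) (hE i q) (hc j) (hc q), hW i j p q]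

end IsManinMatrix

theorem List.prod_map_finRange_eq_of_eq_off_adjacent {M : Type*} [Monoid M] {n : ℕ} (i : Fin n)
    (f g : Fin (n + 1) → M) (h : ∀ p, p ≠ i.castSucc → p ≠ i.succ → g p = f p) :
    ((finRange (n + 1)).map g).prod = (((finRange (n + 1)).take i).map f).prod *
      (g i.castSucc * g i.succ) * (((finRange (n + 1)).drop (i + 2)).map f).prod := by
  have hlt : (i : ℕ) + 1 < (finRange (n + 1)).length := by simp
  conv_lhs => rw [← take_append_drop (i : ℕ) (finRange (n + 1)),
    drop_eq_getElem_cons (by omega), drop_eq_getElem_cons hlt]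
  have htake : ((finRange (n + 1)).take i).map g = ((finRange (n + 1)).take i).map f := by
    refine map_congr_left fun p hp => h p ?_ ?_ <;> rintro rfl <;>
      obtain ⟨k, hk, hki⟩ := mem_iff_getElem.mp hp <;> simp [Fin.ext_iff] at hk hki <;> omega
  have hdrop : ((finRange (n + 1)).drop (i + 2)).map g =
      ((finRange (n + 1)).drop (i + 2)).map f := by
    refine map_congr_left fun p hp => h p ?_ ?_ <;> rintro rfl <;>
      obtain ⟨k, hk, hki⟩ := mem_iff_getElem.mp hp <;> simp [Fin.ext_iff] at hk hki <;> omega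
  simp only [map_append, map_cons, prod_append, prod_cons, htake, hdrop, getElem_finRange]
  rw [mul_assoc, mul_assoc]
  rfl

section Cdet

variable {S : Type*} [Ring S]

open Equiv

theorem cdet_submatrix_swap_adjacent {n : ℕ} {W : Matrix (Fin (n + 1)) (Fin (n + 1)) S}
    (hW : IsManinMatrix W) (i : Fin n) :
    cdet (W.submatrix id (swap i.castSucc i.succ)) = -cdet W := by
  have hne : i.castSucc ≠ i.succ := Fin.castSucc_lt_succ.ne
  set s := swap i.castSucc i.succ
  set F : Perm (Fin (n + 1)) → S := fun σ => (Perm.sign σ : ℤ) •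
    (((List.finRange (n + 1)).map fun p => W (σ p) (s p)).prod +
      ((List.finRange (n + 1)).map fun p => W (σ p) p).prod)
  have hsum : cdet (W.submatrix id s) + cdet W = ∑ σ, F σ := by
    simp only [cdet, F, smul_add, Finset.sum_add_distrib, Matrix.submatrix_apply, id]
  have hpair (σ : Perm (Fin (n + 1))) : F σ + F (σ * s) = 0 := by
    have split (g : Fin (n + 1) → S)
        (hg : ∀ p, p ≠ i.castSucc → p ≠ i.succ → g p = W (σ p) p) :=
      List.prod_map_finRange_eq_of_eq_off_adjacent i (fun p => W (σ p) p) g hg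
    have hs (p) (ht : p ≠ i.castSucc) (hu : p ≠ i.succ) : s p = p :=
      swap_apply_of_ne_of_ne ht hu
    simp only [F, Perm.sign_mul, Perm.mul_apply]
    rw [split _ fun p ht hu => by rw [hs p ht hu], split _ fun p _ _ => rfl,
      split _ fun p ht hu => by rw [hs p ht hu], split _ fun p ht hu => by rw [hs p ht hu]]
    simp only [s, swap_apply_left, swap_apply_right, Perm.sign_swap hne, Units.val_neg,
      mul_neg_one, neg_smul]
    set pre := ((List.finRange (n + 1)).take i).map (fun p => W (σ p) p) |>.prod
    set post := ((List.finRange (n + 1)).drop (i + 2)).map (fun p => W (σ p) p) |>.prod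
    set a := W (σ i.castSucc)
    set b := W (σ i.succ)
    calc _ = (Perm.sign σ : ℤ) • (pre * ((a i.castSucc * b i.succ - b i.succ * a i.castSucc) -
          (b i.castSucc * a i.succ - a i.succ * b i.castSucc)) * post) := by
          simp only [mul_sub, sub_mul, smul_sub, smul_add, mul_assoc]
          abel
      _ = 0 := by rw [hW, sub_self, mul_zero, zero_mul, smul_zero]
  rw [eq_neg_iff_add_eq_zero, hsum]
  refine Finset.sum_involution (fun σ _ => σ * s) (fun σ _ => hpair σ) (fun σ _ _ h => ?_)
    (fun σ _ => Finset.mem_univ _) (fun σ _ => by simp [s, mul_assoc])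
  have := congrArg (· i.castSucc) h
  simp only [Perm.mul_apply, s, swap_apply_left, EmbeddingLike.apply_eq_iff_eq] at this
  exact hne this.symm

theorem cdet_submatrix_perm {n : ℕ} {W : Matrix (Fin n) (Fin n) S} (hW : IsManinMatrix W)
    (τ : Perm (Fin n)) : cdet (W.submatrix id τ) = (Perm.sign τ : ℤ) • cdet W := by
  cases n with
  | zero => simp [Subsingleton.elim τ 1]
  | succ m =>
    have hτ : τ ∈ Submonoid.closure _ :=
      (Perm.mclosure_swap_castSucc_succ m).symm ▸ Submonoid.mem_top τ
    induction hτ using Submonoid.closure_induction generalizing W with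
    | mem _ hx =>
      obtain ⟨i, rfl⟩ := hx
      simp [cdet_submatrix_swap_adjacent hW, Perm.sign_swap Fin.castSucc_lt_succ.ne]
    | one => simp
    | mul x y _ _ hx hy =>
      rw [Perm.coe_mul, ← Function.id_comp id, ← Matrix.submatrix_submatrix,
        hy (hW.submatrix id x), hx hW, smul_smul, Perm.sign_mul, Units.val_mul, mul_comm]

theorem cdet_eq_zero_of_col_eq [IsAddTorsionFree S] {n : ℕ} {W : Matrix (Fin n) (Fin n) S}
    (hW : IsManinMatrix W) {t u : Fin n} (hne : t ≠ u) (hcol : ∀ a, W a t = W a u) :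
    cdet W = 0 := by
  have hswap : W.submatrix id (swap t u) = W := by
    ext a p
    rcases eq_or_ne p t with rfl | hpt
    · simp [hcol]
    rcases eq_or_ne p u with rfl | hpu
    · simp [hcol]
    · simp [swap_apply_of_ne_of_ne hpt hpu]
  have h := cdet_submatrix_perm hW (swap t u)
  rw [hswap, Perm.sign_swap hne, Units.val_neg, Units.val_one, neg_one_smul] at h
  exact self_eq_neg.mp h

end Cdet

section Cofactor

variable {S : Type*} [Ring S] {m : ℕ}

open Equiv

/-- Only the last column can be split off on the right, because `cdet` multiplies the entries
in column order. -/
noncomputable def cdetCofactor (V : Matrix (Fin (m + 1)) (Fin m) S) (j : Fin (m + 1)) : S :=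
  ∑ σ : Perm (Fin (m + 1)) with σ (Fin.last m) = j,
    (Perm.sign σ : ℤ) • ((List.finRange m).map fun p => V (σ p.castSucc) p).prod

theorem cdet_eq_sum_cdetCofactor_mul (W : Matrix (Fin (m + 1)) (Fin (m + 1)) S) :
    cdet W = ∑ j, cdetCofactor (W.submatrix id Fin.castSucc) j * W j (Fin.last m) := by
  simp only [cdet, cdetCofactor, Finset.sum_mul]
  rw [← Finset.sum_fiberwise Finset.univ fun σ : Perm (Fin (m + 1)) => σ (Fin.last m)]
  refine Finset.sum_congr rfl fun j _ => Finset.sum_congr rfl fun σ hσ => ?_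
  rw [(Finset.mem_filter.mp hσ).2.symm, ← List.ofFn_eq_map, List.ofFn_succ', List.prod_concat,
    List.ofFn_eq_map, smul_mul_assoc]
  rfl

noncomputable def cdetAdj (M : Matrix (Fin (m + 1)) (Fin (m + 1)) S) :
    Matrix (Fin (m + 1)) (Fin (m + 1)) S :=
  Matrix.of fun i j => (Perm.sign (swap i (Fin.last m)) : ℤ) •
    cdetCofactor (M.submatrix id (swap i (Fin.last m) ∘ Fin.castSucc)) j

theorem cdet_updateCol_eq_sum_cdetAdj_mul {M : Matrix (Fin (m + 1)) (Fin (m + 1)) S}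
    {i : Fin (m + 1)} {v : Fin (m + 1) → S} (hM : IsManinMatrix (M.updateCol i v)) :
    cdet (M.updateCol i v) = ∑ j, cdetAdj M i j * v j := by
  set s := swap i (Fin.last m)
  have hswap := cdet_submatrix_perm hM s
  have hcols : ((M.updateCol i v).submatrix id s).submatrix id Fin.castSucc =
      M.submatrix id (s ∘ Fin.castSucc) := by
    ext a p
    have hp : s p.castSucc ≠ i := by
      rw [Ne, swap_apply_eq_iff, swap_apply_left]
      exact Fin.castSucc_ne_last p
    simp [Matrix.updateCol_ne hp]
  calc cdet (M.updateCol i v)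
      = (Perm.sign s : ℤ) • cdet ((M.updateCol i v).submatrix id s) := by
        rw [hswap, smul_smul, ← Units.val_mul, Int.units_mul_self, Units.val_one, one_smul]
    _ = ∑ j, cdetAdj M i j * v j := by
        rw [cdet_eq_sum_cdetCofactor_mul, hcols, Finset.smul_sum]
        refine Finset.sum_congr rfl fun j _ => ?_
        simp only [cdetAdj, Matrix.of_apply, Matrix.submatrix_apply, id, s, swap_apply_right,
          Matrix.updateCol_self, smul_mul_assoc]

theorem cdetAdj_mul [IsAddTorsionFree S] {M : Matrix (Fin (m + 1)) (Fin (m + 1)) S}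
    (hM : IsManinMatrix M) : cdetAdj M * M = cdet M • 1 := by
  ext i l
  have hcol : M.updateCol i (fun a => M a l) = M.submatrix id (Function.update id i l) := by
    ext a p
    rcases eq_or_ne p i with rfl | hp <;> simp [*]
  have hManin : IsManinMatrix (M.updateCol i fun a => M a l) := hcol ▸ hM.submatrix _ _
  rw [Matrix.mul_apply, ← cdet_updateCol_eq_sum_cdetAdj_mul hManin]
  rcases eq_or_ne i l with rfl | hil
  · simp [Matrix.updateCol_eq_self]
  · rw [cdet_eq_zero_of_col_eq hManin hil fun a => ?_]
    · simp [hil]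
    · simp [Ne.symm hil]

end Cofactor

open Polynomial Finset

section Derivative

variable {R : Type*} [Ring R]

theorem Polynomial.derivative_prod_ofFn : ∀ {n : ℕ} (f : Fin n → R[X]),
    derivative (List.ofFn f).prod =
      ∑ i, (List.ofFn (Function.update f i (derivative (f i)))).prod
  | 0, _ => by simp
  | n + 1, f => by
    rw [List.ofFn_succ, List.prod_cons, derivative_mul, derivative_prod_ofFn, Fin.sum_univ_succ,
      Finset.mul_sum]
    congr 1
    · simp [List.ofFn_succ, Fin.succ_ne_zero]
    · refine Finset.sum_congr rfl fun i _ => ?_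
      simp only [List.ofFn_succ, List.prod_cons, Function.update_of_ne (Fin.succ_ne_zero i).symm]
      congr 3
      ext j
      simp [Function.update_apply]

theorem derivative_cdet {n : ℕ} (M : Matrix (Fin n) (Fin n) R[X]) :
    derivative (cdet M) = ∑ i, cdet (M.updateCol i fun a => derivative (M a i)) := by
  simp only [cdet, map_sum, map_zsmul, ← List.ofFn_eq_map, derivative_prod_ofFn,
    Finset.smul_sum]
  rw [Finset.sum_comm]
  refine Finset.sum_congr rfl fun i _ => Finset.sum_congr rfl fun σ _ => ?_
  congr 3
  ext p
  rcases eq_or_ne p i with rfl | hp <;> simp [*]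

end Derivative

section OneAddXSmul

variable {R : Type*} [Ring R]

theorem Polynomial.coeff_sum_range_C_mul_X_pow (c : ℕ → R) {N j : ℕ} (hj : j < N) :
    (∑ q ∈ range N, C (c q) * X ^ q).coeff j = c j := by
  simp [hj]

theorem coeff_trace_mul_map_C_of_mul_one_add_X_smul {ι : Type*} [Fintype ι] [DecidableEq ι]
    {A : Matrix ι ι R} {G : Matrix ι ι R[X]} {P : R[X]}
    (hG : G * (1 + (X : R[X]) • A.map C) = P • 1) (k : ℕ) :
    (G * A.map C).trace.coeff k =
      ∑ i ∈ range (k + 1), P.coeff i * ((-1) ^ (k - i) * (A ^ (k - i + 1)).trace) := by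
  set B := A.map C
  have hcentral : ∀ p : R[X], Commute (-X) p := fun p => (commute_X p).neg_left
  set Y := Matrix.scalar ι (-X : R[X]) * B
  have hY : 1 + (X : R[X]) • B = 1 - Y := by
    rw [Matrix.smul_eq_diagonal_mul, sub_eq_add_neg, ← neg_mul, Matrix.scalar_apply,
      Matrix.diagonal_neg, neg_neg]
  have hYpow (q : ℕ) : Y ^ q = Matrix.scalar ι ((-X : R[X]) ^ q) * B ^ q := by
    rw [(Matrix.scalar_commute _ hcentral B).mul_pow, map_pow]
  have hgeom : G = P • ∑ q ∈ range (k + 1), Y ^ q + G * Y ^ (k + 1) := by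
    have h := congrArg (· * ∑ q ∈ range (k + 1), Y ^ q) hG
    rw [hY, mul_assoc, mul_neg_geom_sum, Matrix.smul_mul, one_mul, mul_sub, mul_one] at h
    exact sub_eq_iff_eq_add.mp h
  have htrace (q : ℕ) (N : Matrix ι ι R[X]) :
      (Matrix.scalar ι ((-X : R[X]) ^ q) * N).trace = (-X) ^ q * N.trace := by
    rw [Matrix.scalar_apply, ← Matrix.smul_eq_diagonal_mul, Matrix.trace_smul, smul_eq_mul]
  have hpowtrace (q : ℕ) : (B ^ q).trace = C (A ^ q).trace := by
    rw [← Matrix.map_pow, ← AddMonoidHom.map_trace]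
  have hsplit : (G * B).trace =
      P * ∑ q ∈ range (k + 1), C ((-1) ^ q * (A ^ (q + 1)).trace) * X ^ q +
        X ^ (k + 1) * ((-1) ^ (k + 1) * (G * B ^ (k + 2)).trace) := by
    have hterm (q : ℕ) : (Y ^ q * B).trace = C ((-1) ^ q * (A ^ (q + 1)).trace) * X ^ q := by
      rw [hYpow, mul_assoc, ← pow_succ, htrace, hpowtrace, neg_pow, map_mul, mul_assoc, X_pow_mul,
        ← mul_assoc]
      simp
    have hrem : (G * Y ^ (k + 1) * B).trace =
        X ^ (k + 1) * ((-1) ^ (k + 1) * (G * B ^ (k + 2)).trace) := by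
      rw [hYpow, ← (Matrix.scalar_commute _ (fun p => (hcentral p).pow_left _) G).left_comm,
        mul_assoc, mul_assoc, ← pow_succ, htrace, neg_pow, mul_assoc,
        ((Commute.neg_one_left _).pow_left _).left_comm]
    conv_lhs => rw [hgeom]
    rw [add_mul, Matrix.trace_add, Matrix.smul_mul, Matrix.trace_smul, smul_eq_mul, sum_mul,
      Matrix.trace_sum, hrem]
    simp only [hterm]
  rw [hsplit, coeff_add, coeff_X_pow_mul', if_neg (by omega), add_zero, coeff_mul,
    Nat.sum_antidiagonal_eq_sum_range_succ_mk]
  refine sum_congr rfl fun i hi => ?_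
  rw [coeff_sum_range_C_mul_X_pow _ (by omega)]

theorem IsManinMatrix.one_add_X_smul_map_C {n : ℕ} {A : Matrix (Fin n) (Fin n) R}
    (hA : IsManinMatrix A) : IsManinMatrix (1 + (X : R[X]) • A.map C) := by
  have hM : 1 + (X : R[X]) • A.map C = 1 + A.map C * Matrix.diagonal fun _ => X := by
    ext a t
    simp [Matrix.mul_diagonal, (commute_X _).eq]
  rw [hM]
  refine (hA.map C).central_add_mul_diagonal (fun a t z => ?_) fun _ => commute_X
  rw [Matrix.one_apply]
  split_ifs
  exacts [Commute.one_left z, Commute.zero_left z]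

theorem IsManinMatrix.updateCol_one_add_X_smul_map_C {n : ℕ} {A : Matrix (Fin n) (Fin n) R}
    (hA : IsManinMatrix A) (i : Fin n) :
    IsManinMatrix ((1 + (X : R[X]) • A.map C).updateCol i fun a => C (A a i)) := by
  have hM : (1 + (X : R[X]) • A.map C).updateCol i (fun a => C (A a i)) =
      (1 : Matrix (Fin n) (Fin n) R[X]).updateCol i 0 +
        A.map C * Matrix.diagonal (Function.update (fun _ => X) i 1) := by
    ext a t
    rcases eq_or_ne t i with rfl | ht <;> simp [Matrix.mul_diagonal, (commute_X _).eq, *]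
  rw [hM]
  refine (hA.map C).central_add_mul_diagonal (fun a t z => ?_) fun t z => ?_
  · rw [Matrix.updateCol_apply, Matrix.one_apply]
    split_ifs
    exacts [Commute.zero_left z, Commute.one_left z, Commute.zero_left z]
  · rw [Function.update_apply]
    split_ifs
    exacts [Commute.one_left z, commute_X z]

theorem derivative_cdet_one_add_X_smul_map_C {m : ℕ} {A : Matrix (Fin (m + 1)) (Fin (m + 1)) R}
    (hA : IsManinMatrix A) :
    derivative (cdet (1 + (X : R[X]) • A.map C)) =
      (cdetAdj (1 + (X : R[X]) • A.map C) * A.map C).trace := by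
  rw [derivative_cdet, Matrix.trace]
  refine sum_congr rfl fun i _ => ?_
  have hcol : (fun a => derivative ((1 + (X : R[X]) • A.map C) a i)) = fun a => C (A a i) := by
    ext1 a
    rw [Matrix.add_apply, Matrix.one_apply]
    split_ifs <;> simp
  rw [hcol, cdet_updateCol_eq_sum_cdetAdj_mul (hA.updateCol_one_add_X_smul_map_C i)]
  simp [Matrix.mul_apply]

end OneAddXSmul

theorem eq_smul_sum_of_mul_succ_eq_sum {R : Type*} [Ring R] [Algebra ℚ R] (σ T : ℕ → R)
    (j : ℕ) (h : σ (j + 1) * ((j : R) + 1) =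
      ∑ i ∈ range (j + 1), σ i * ((-1) ^ (j - i) * T (j - i + 1))) :
    σ (j + 1) = ((-1 : ℚ) ^ (j + 1 + 1) / ((j + 1 : ℕ) : ℚ)) •
      ∑ i ∈ range (j + 1), (-1 : ℚ) ^ i • (σ i * T (j + 1 - i)) := by
  have hsign (i : ℕ) (hi : i ≤ j) (x y : R) :
      x * ((-1) ^ (j - i) * y) = ((-1 : ℚ) ^ j * (-1) ^ i) • (x * y) := by
    rw [← pow_add, show j + i = j - i + 2 * i by omega, pow_add, pow_mul, neg_one_sq, one_pow,
      mul_one, ← mul_assoc, ((Commute.neg_one_right x).pow_right _).eq, mul_assoc]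
    simp [Algebra.smul_def]
  have hrhs : ∑ i ∈ range (j + 1), σ i * ((-1) ^ (j - i) * T (j - i + 1)) =
      (-1 : ℚ) ^ j • ∑ i ∈ range (j + 1), (-1 : ℚ) ^ i • (σ i * T (j + 1 - i)) := by
    rw [smul_sum]
    refine sum_congr rfl fun i hi => ?_
    have hi : i ≤ j := Nat.lt_succ_iff.mp (mem_range.mp hi)
    rw [hsign i hi, show j - i + 1 = j + 1 - i by omega, smul_smul]
  have hlhs : σ (j + 1) * ((j : R) + 1) = ((j : ℚ) + 1) • σ (j + 1) := by
    rw [← Nat.cast_succ, ← Nat.cast_succ, Nat.cast_smul_eq_nsmul, nsmul_eq_mul']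
  calc σ (j + 1) = ((j : ℚ) + 1)⁻¹ • (((j : ℚ) + 1) • σ (j + 1)) :=
        (inv_smul_smul₀ (by positivity) _).symm
    _ = _ := by
        rw [← hlhs, h, hrhs, smul_smul]
        push_cast
        ring_nf

/-- Newton's identities for Manin matrices: if `A` is an `n × n` Manin matrix over an
associative unital `ℚ`-algebra `R`, `T_k = tr(A^k)`, and `σ_0, …, σ_n` are defined by
`cdet(1 + αA) = ∑_{k=0}^{n} σ_k α^k` in `R[α]`, then for every `k = 1, …, n`,
`σ_k = ((−1)^{k+1}/k) ∑_{i=0}^{k−1} (−1)^i σ_i T_{k−i}`. -/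
theorem newton_identities_manin (R : Type*) [Ring R] [Algebra ℚ R] (n : ℕ)
    (A : Matrix (Fin n) (Fin n) R) (hA : IsManinMatrix A)
    (σ : ℕ → R)
    (hσ : cdet ((1 : Matrix (Fin n) (Fin n) (Polynomial R)) +
        (Polynomial.X : Polynomial R) • A.map Polynomial.C) =
      ∑ k ∈ Finset.range (n + 1), Polynomial.C (σ k) * Polynomial.X ^ k) :
    ∀ k, 1 ≤ k → k ≤ n →
      σ k = (((-1 : ℚ) ^ (k + 1)) / (k : ℚ)) •
        ∑ i ∈ Finset.range k, ((-1 : ℚ) ^ i) • (σ i * Matrix.trace (A ^ (k - i))) := by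
  intro k hk hkn
  obtain ⟨m, rfl⟩ : ∃ m, n = m + 1 := ⟨n - 1, by omega⟩
  obtain ⟨j, rfl⟩ : ∃ j, k = j + 1 := ⟨k - 1, by omega⟩
  have := IsAddTorsionFree.of_module_rat R[X]
  set M := 1 + (X : R[X]) • A.map C
  have hcoeff (i : ℕ) (hi : i ≤ j + 1) : (cdet M).coeff i = σ i := by
    rw [hσ, coeff_sum_range_C_mul_X_pow _ (by omega)]
  have hderiv := coeff_trace_mul_map_C_of_mul_one_add_X_smul (cdetAdj_mul hA.one_add_X_smul_map_C) j
  rw [← derivative_cdet_one_add_X_smul_map_C hA, coeff_derivative, hcoeff _ le_rfl] at hderiv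
  refine eq_smul_sum_of_mul_succ_eq_sum σ (fun q => (A ^ q).trace) j (hderiv.trans ?_)
  exact sum_congr rfl fun i hi => by rw [hcoeff i (mem_range.mp hi).le]
end

section
/- Let F be a finitely generated commutative unital algebra over the polynomial ring ℂ[w], and let Tors F = {a ∈ F : p·a = 0 for some nonzero p ∈ ℂ[w]} be its ℂ[w]-torsion ideal. Then there exists a finite subset I ⊂ ℂ such that for every t ∈ ℂ \ I one has Tors F ⊆ (w−t)F; consequently, for every such t the natural surjective ring homomorphism F/(w−t)F → (F/Tors F)/((w−t)·(F/Tors F)) is an isomorphism. -/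
/-!
`F` is Noetherian, so `Tors F` is finitely generated and hence killed by a single nonzero
`P ∈ ℂ[w]`. If `P(t) ≠ 0`, writing `P = (w - t) Q + P(t)` shows that every `a` with `P a = 0`
is a multiple of `w - t`; so the exceptional set is the set of roots of `P`. Once
`Tors F ⊆ (w - t) F`, the preimage of `(w - t) (F / Tors F)` in `F` is `(w - t) F`, which is
injectivity of the quotient map.
-/

/-- The `ℂ[w]`-torsion ideal `Tors F = {a ∈ F : p·a = 0 for some nonzero p ∈ ℂ[w]}` of a
commutative `ℂ[w]`-algebra `F`. -/
noncomputable def torsIdeal (F : Type*) [CommRing F] [Algebra (Polynomial ℂ) F] : Ideal F where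
  carrier := {a | ∃ p : Polynomial ℂ, p ≠ 0 ∧ p • a = 0}
  add_mem' := by
    rintro a b ⟨p, hp, hpa⟩ ⟨q, hq, hqb⟩
    refine ⟨p * q, mul_ne_zero hp hq, ?_⟩
    have h1 : (p * q) • a = 0 := by rw [mul_comm, mul_smul, hpa, smul_zero]
    have h2 : (p * q) • b = 0 := by rw [mul_smul, hqb, smul_zero]
    rw [smul_add, h1, h2, add_zero]
  zero_mem' := ⟨1, one_ne_zero, smul_zero 1⟩
  smul_mem' := by
    rintro c a ⟨p, hp, hpa⟩
    exact ⟨p, hp, by rw [smul_comm, hpa, smul_zero]⟩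

open Polynomial

theorem Ideal.comap_mk_span_singleton_mk {R : Type*} [CommRing R] {I : Ideal R} {g : R}
    (h : I ≤ Ideal.span {g}) :
    (Ideal.span {Ideal.Quotient.mk I g}).comap (Ideal.Quotient.mk I) = Ideal.span {g} := by
  rw [← Set.image_singleton, ← Ideal.map_span, Ideal.comap_map_mk h]

theorem mem_span_algebraMap_X_sub_C_of_smul_eq_zero {K A : Type*} [Field K] [CommRing A]
    [Algebra K[X] A] {p : K[X]} {t : K} (ht : p.eval t ≠ 0) {x : A} (hx : p • x = 0) :
    x ∈ Ideal.span {algebraMap K[X] A (X - C t)} := by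
  set f := algebraMap K[X] A
  have hdiv : f p = f (X - C t) * f (p /ₘ (X - C t)) + f (C (p.eval t)) := by
    rw [← map_mul, ← map_add, add_comm, ← modByMonic_X_sub_C_eq_C_eval, modByMonic_add_div]
  have hunit : f (C (p.eval t)⁻¹) * f (C (p.eval t)) = 1 := by
    rw [← map_mul, ← C_mul, inv_mul_cancel₀ ht, C_1, map_one]
  rw [Algebra.smul_def] at hx
  refine Ideal.mem_span_singleton'.mpr ⟨-(f (C (p.eval t)⁻¹) * f (p /ₘ (X - C t)) * x), ?_⟩
  linear_combination -f (C (p.eval t)⁻¹) * hx + f (C (p.eval t)⁻¹) * x * hdiv + x * hunit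

theorem exists_ne_zero_smul_eq_zero_of_mem_torsIdeal (F : Type*) [CommRing F]
    [Algebra ℂ[X] F] [IsNoetherianRing F] :
    ∃ p : ℂ[X], p ≠ 0 ∧ ∀ x ∈ torsIdeal F, p • x = 0 := by
  classical
  obtain ⟨s, hs⟩ : (torsIdeal F).FG := IsNoetherian.noetherian _
  have hgen : ∀ a ∈ s, ∃ p : ℂ[X], p ≠ 0 ∧ p • a = 0 := fun a ha =>
    (hs ▸ Ideal.subset_span ha : a ∈ torsIdeal F)
  choose! p hp0 hpa using hgen
  refine ⟨∏ a ∈ s, p a, Finset.prod_ne_zero_iff.mpr hp0, fun x hx => ?_⟩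
  have hann : algebraMap ℂ[X] F (∏ a ∈ s, p a) ∈ (torsIdeal F).annihilator := by
    rw [← hs, Submodule.mem_annihilator_span]
    rintro ⟨a, ha⟩
    obtain ⟨q, hq⟩ := Finset.dvd_prod_of_mem p ha
    rw [smul_eq_mul, ← Algebra.smul_def, hq, mul_comm, mul_smul, hpa a ha, smul_zero]
  rw [Algebra.smul_def]
  exact Submodule.mem_annihilator.mp hann x hx

/-- Let `F` be a finitely generated commutative unital `ℂ[w]`-algebra and `Tors F` its
`ℂ[w]`-torsion ideal. Then there is a finite set `I ⊂ ℂ` such that for all `t ∉ I` one has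
`Tors F ⊆ (w−t)F`; consequently, for such `t` the natural surjection
`F/(w−t)F → (F/Tors F)/((w−t)·(F/Tors F))` is an isomorphism. -/
theorem torsion_le_span_and_quotient_iso (F : Type*) [CommRing F]
    [Algebra (Polynomial ℂ) F] [Algebra.FiniteType (Polynomial ℂ) F] :
    ∃ I : Finset ℂ, ∀ t : ℂ, t ∉ I →
      torsIdeal F ≤
        Ideal.span {algebraMap (Polynomial ℂ) F (Polynomial.X - Polynomial.C t)} ∧
      Function.Bijective
        (Ideal.quotientMap
          (I := Ideal.span {algebraMap (Polynomial ℂ) F (Polynomial.X - Polynomial.C t)})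
          (Ideal.span {Ideal.Quotient.mk (torsIdeal F)
            (algebraMap (Polynomial ℂ) F (Polynomial.X - Polynomial.C t))})
          (Ideal.Quotient.mk (torsIdeal F))
          (by
            rw [Ideal.span_le]
            rintro x rfl
            exact Ideal.mem_comap.mpr (Ideal.subset_span rfl))) := by
  have := Algebra.FiniteType.isNoetherianRing ℂ[X] F
  obtain ⟨P, hP0, hP⟩ := exists_ne_zero_smul_eq_zero_of_mem_torsIdeal F
  refine ⟨P.roots.toFinset, fun t ht => ?_⟩
  have hPt : P.eval t ≠ 0 := by simpa [hP0] using ht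
  have hle : torsIdeal F ≤ Ideal.span {algebraMap ℂ[X] F (X - C t)} := fun x hx =>
    mem_span_algebraMap_X_sub_C_of_smul_eq_zero hPt (hP x hx)
  exact ⟨hle, Ideal.quotientMap_injective' (Ideal.comap_mk_span_singleton_mk hle).le,
    Ideal.quotientMap_surjective Ideal.Quotient.mk_surjective⟩
end

section
/- Let A be a commutative unital ring, k ≥ 1 an integer, and m_1 < m_2 < ⋯ < m_k integers. For each i = 1, …, k let f_i ∈ A((x)) be a formal Laurent series whose coefficient of x^{m_i} equals 1 and whose coefficient of x^q vanishes for all q < m_i. Let W(f_1, …, f_k) = det(f_i^{(j−1)})_{i,j=1}^{k} be the Wronskian, where f^{(j)} is the j-th termwise formal derivative. Set Q = m_1 + ⋯ + m_k − k(k−1)/2. Then the coefficient of x^q in W(f_1, …, f_k) vanishes for every q < Q, and the coefficient of x^Q equals (∏_{1 ≤ i < j ≤ k} (m_j − m_i)) · 1_A. In particular, W(f_1, …, f_k) ≠ 0 whenever A is a nonzero ℚ-algebra. -/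
/-!
Expanding the determinant, each term `± ∏ⱼ f_{σ j}^{(j)}` vanishes below `x^Q`, because
`f^{(j)}` vanishes below `x^{m - j}` when `f` vanishes below `x^m`, and its coefficient at `x^Q`
is the product of these lowest coefficients. Since the coefficient of `f^{(j)}` at `x^{m - j}` is
the falling factorial `m (m - 1) ⋯ (m - j + 1)` times that of `f` at `x^m`, the coefficient of
`W` at `x^Q` is the determinant of the matrix of falling factorials `(m_i)_j`, a monic polynomial
of degree `j` in `m_i`; column reduction turns it into the Vandermonde determinant
`∏_{i<j} (m_j - m_i)`.
-/

/-- The termwise formal derivative of a formal Laurent series. -/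
noncomputable def lderiv {A : Type*} [CommRing A] (f : LaurentSeries A) : LaurentSeries A where
  coeff q := (q + 1) • f.coeff (q + 1)
  isPWO_support' := by
    have h : Function.support (fun q : ℤ => (q + 1) • f.coeff (q + 1)) ⊆
        (fun q : ℤ => q - 1) '' f.support := by
      intro q hq
      refine ⟨q + 1, ?_, by ring⟩
      intro hc
      simp [Function.mem_support, hc] at hq
    exact (Set.IsPWO.image_of_monotone f.isPWO_support (fun a b hab => by omega)).mono h

/-- The Wronskian `W(f_1, …, f_k) = det(f_i^{(j−1)})` of Laurent series. -/
noncomputable def wronskian {A : Type*} [CommRing A] {k : ℕ}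
    (f : Fin k → LaurentSeries A) : LaurentSeries A :=
  Matrix.det (Matrix.of fun i j : Fin k => lderiv^[(j : ℕ)] (f i))

open Finset

namespace HahnSeries

theorem order_eq_of_orderTop_eq {Γ R : Type*} [Zero Γ] [LinearOrder Γ] [Zero R]
    {x : HahnSeries Γ R} {a : Γ} (h : x.orderTop = a) : x.order = a := by
  have hx : x ≠ 0 := orderTop_ne_top.mp (h ▸ WithTop.coe_ne_top)
  exact WithTop.coe_injective ((order_eq_orderTop_of_ne_zero hx).trans h)

variable {Γ R : Type*} [AddCommMonoid Γ] [LinearOrder Γ] [IsOrderedCancelAddMonoid Γ]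

theorem coeff_mul_add_of_le_orderTop [NonUnitalNonAssocSemiring R] {x y : HahnSeries Γ R}
    {a b : Γ} (ha : (a : WithTop Γ) ≤ x.orderTop) (hb : (b : WithTop Γ) ≤ y.orderTop) :
    (x * y).coeff (a + b) = x.coeff a * y.coeff b := by
  -- unless both bounds are attained, both sides vanish; otherwise they are leading coefficients
  rcases ha.lt_or_eq with ha' | ha'
  · rw [coeff_eq_zero_of_lt_orderTop ha', zero_mul]
    refine coeff_eq_zero_of_lt_orderTop (lt_of_lt_of_le ?_ orderTop_add_le_mul)
    exact WithTop.coe_add a b ▸ WithTop.add_lt_add_of_lt_of_le WithTop.coe_ne_top ha' hb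
  rcases hb.lt_or_eq with hb' | hb'
  · rw [coeff_eq_zero_of_lt_orderTop hb', mul_zero]
    refine coeff_eq_zero_of_lt_orderTop (lt_of_lt_of_le ?_ orderTop_add_le_mul)
    exact WithTop.coe_add a b ▸ WithTop.add_lt_add_of_le_of_lt WithTop.coe_ne_top ha hb'
  rw [← order_eq_of_orderTop_eq ha'.symm, ← order_eq_of_orderTop_eq hb'.symm,
    coeff_mul_order_add_order, leadingCoeff_eq, leadingCoeff_eq]

section CommSemiring

variable [CommSemiring R] {ι : Type*}

theorem sum_le_orderTop_prod {s : Finset ι} {g : ι → HahnSeries Γ R} {a : ι → Γ}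
    (h : ∀ i ∈ s, (a i : WithTop Γ) ≤ (g i).orderTop) :
    ((∑ i ∈ s, a i : Γ) : WithTop Γ) ≤ (∏ i ∈ s, g i).orderTop := by
  induction s using Finset.cons_induction with
  | empty =>
    refine le_orderTop_iff_forall.mpr fun j hj => ?_
    rw [sum_empty, WithTop.coe_lt_coe] at hj
    rw [prod_empty, coeff_one, if_neg hj.ne]
  | cons i s hi ih =>
    rw [sum_cons, prod_cons, WithTop.coe_add]
    exact (add_le_add (h i (mem_cons_self i s))
      (ih fun j hj => h j (mem_cons_of_mem hj))).trans orderTop_add_le_mul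

theorem coeff_prod_sum_of_le_orderTop {s : Finset ι} {g : ι → HahnSeries Γ R} {a : ι → Γ}
    (h : ∀ i ∈ s, (a i : WithTop Γ) ≤ (g i).orderTop) :
    (∏ i ∈ s, g i).coeff (∑ i ∈ s, a i) = ∏ i ∈ s, (g i).coeff (a i) := by
  induction s using Finset.cons_induction with
  | empty => simp
  | cons i s hi ih =>
    have hs : ∀ j ∈ s, (a j : WithTop Γ) ≤ (g j).orderTop := fun j hj => h j (mem_cons_of_mem hj)
    rw [sum_cons, prod_cons, prod_cons, coeff_mul_add_of_le_orderTop (h i (mem_cons_self i s))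
      (sum_le_orderTop_prod hs), ih hs]

end CommSemiring

section CommRing

variable [CommRing R] {n : Type*} [Fintype n]

theorem coeff_det [DecidableEq n] (M : Matrix n n (HahnSeries Γ R)) (q : Γ) :
    M.det.coeff q = ∑ σ : Equiv.Perm n, Equiv.Perm.sign σ • (∏ i, M (σ i) i).coeff q := by
  simp only [Matrix.det_apply, coeff_sum, Units.smul_def, coeff_smul]

variable {M : Matrix n n (HahnSeries Γ R)} {a b : n → Γ}

theorem sum_le_orderTop_prod_perm (h : ∀ i j, ((a i + b j : Γ) : WithTop Γ) ≤ (M i j).orderTop)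
    (σ : Equiv.Perm n) : ((∑ i, a i + ∑ j, b j : Γ) : WithTop Γ) ≤ (∏ i, M (σ i) i).orderTop := by
  rw [← Equiv.sum_comp σ a, ← sum_add_distrib]
  exact sum_le_orderTop_prod fun i _ => h (σ i) i

variable [DecidableEq n]

theorem le_orderTop_det (h : ∀ i j, ((a i + b j : Γ) : WithTop Γ) ≤ (M i j).orderTop) :
    ((∑ i, a i + ∑ j, b j : Γ) : WithTop Γ) ≤ M.det.orderTop := by
  refine le_orderTop_iff_forall.mpr fun q hq => ?_
  rw [coeff_det]
  refine sum_eq_zero fun σ _ => ?_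
  rw [coeff_eq_zero_of_lt_orderTop (hq.trans_le (sum_le_orderTop_prod_perm h σ)), smul_zero]

theorem coeff_det_sum_add_sum (h : ∀ i j, ((a i + b j : Γ) : WithTop Γ) ≤ (M i j).orderTop) :
    M.det.coeff (∑ i, a i + ∑ j, b j) = (Matrix.of fun i j => (M i j).coeff (a i + b j)).det := by
  rw [coeff_det, Matrix.det_apply]
  refine sum_congr rfl fun σ _ => ?_
  rw [← Equiv.sum_comp σ a, ← sum_add_distrib,
    coeff_prod_sum_of_le_orderTop fun i _ => h (σ i) i]
  rfl

end CommRing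

end HahnSeries

section lderiv

variable {A : Type*} [CommRing A]

theorem coeff_lderiv (f : LaurentSeries A) (q : ℤ) :
    (lderiv f).coeff q = (q + 1) • f.coeff (q + 1) :=
  rfl

theorem le_orderTop_lderiv_iterate {f : LaurentSeries A} {n : ℤ}
    (h : (n : WithTop ℤ) ≤ f.orderTop) (j : ℕ) :
    ((n - j : ℤ) : WithTop ℤ) ≤ (lderiv^[j] f).orderTop := by
  induction j with
  | zero => simpa using h
  | succ j ih =>
    refine HahnSeries.le_orderTop_iff_forall.mpr fun q hq => ?_
    rw [Function.iterate_succ_apply', coeff_lderiv,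
      HahnSeries.coeff_eq_zero_of_lt_orderTop (lt_of_lt_of_le ?_ ih), smul_zero]
    rw [WithTop.coe_lt_coe] at hq ⊢
    omega

theorem coeff_lderiv_iterate_sub (f : LaurentSeries A) (n : ℤ) (j : ℕ) :
    (lderiv^[j] f).coeff (n - j) = (descPochhammer ℤ j).eval n • f.coeff n := by
  induction j generalizing f n with
  | zero => simp
  | succ j ih =>
    rw [Function.iterate_succ_apply, show n - (j + 1 : ℕ) = n - 1 - j by push_cast; ring, ih,
      coeff_lderiv, sub_add_cancel, descPochhammer_succ_left, smul_smul]
    simp [mul_comm]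

end lderiv

theorem det_eval_descPochhammer {R : Type*} [CommRing R] [IsDomain R] {k : ℕ} (v : Fin k → R) :
    (Matrix.of fun i j : Fin k => (descPochhammer R j).eval (v i)).det =
      ∏ i, ∏ j ∈ Ioi i, (v j - v i) := by
  rw [← Matrix.det_vandermonde, Matrix.det_eval_matrixOfPolynomials_eq_det_vandermonde v _
    (fun j => descPochhammer_natDegree R j) (fun j => monic_descPochhammer R j)]

theorem prod_filter_fst_lt_snd {M : Type*} [CommMonoid M] {k : ℕ} (g : Fin k → Fin k → M) :
    ∏ p ∈ univ.filter (fun p : Fin k × Fin k => p.1 < p.2), g p.1 p.2 =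
      ∏ i, ∏ j ∈ Ioi i, g i j := by
  rw [prod_filter, Fintype.prod_prod_type]
  refine prod_congr rfl fun i _ => ?_
  rw [← prod_filter]
  congr 1
  ext j
  simp

section wronskian

variable {A : Type*} [CommRing A] {k : ℕ} {f : Fin k → LaurentSeries A} {m : Fin k → ℤ}

theorem sum_sub_triangle_eq_sum_add_sum_neg (m : Fin k → ℤ) :
    ∑ i, m i - ((k * (k - 1) / 2 : ℕ) : ℤ) = ∑ i, m i + ∑ j : Fin k, -(j : ℤ) := by
  rw [sum_neg_distrib, ← sub_eq_add_neg, ← (Fin.sum_univ_eq_sum_range (fun i => i) k).trans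
    (sum_range_id k), Nat.cast_sum]

theorem le_orderTop_wronskian (h : ∀ i, (m i : WithTop ℤ) ≤ (f i).orderTop) :
    ((∑ i, m i - ((k * (k - 1) / 2 : ℕ) : ℤ) : ℤ) : WithTop ℤ) ≤ (wronskian f).orderTop := by
  rw [sum_sub_triangle_eq_sum_add_sum_neg]
  exact HahnSeries.le_orderTop_det fun i j => le_orderTop_lderiv_iterate (h i) j

theorem coeff_wronskian_sum_sub (h : ∀ i, (m i : WithTop ℤ) ≤ (f i).orderTop) :
    (wronskian f).coeff (∑ i, m i - ((k * (k - 1) / 2 : ℕ) : ℤ)) =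
      (∏ i, (f i).coeff (m i)) * ((∏ i, ∏ j ∈ Ioi i, (m j - m i) : ℤ) : A) := by
  rw [sum_sub_triangle_eq_sum_add_sum_neg, wronskian,
    HahnSeries.coeff_det_sum_add_sum (M := .of fun i j : Fin k => lderiv^[(j : ℕ)] (f i))
      fun i j => le_orderTop_lderiv_iterate (h i) j,
    ← det_eval_descPochhammer, Int.cast_det, ← Matrix.det_mul_column]
  congr 1
  ext i j
  simp only [Matrix.of_apply, Matrix.map_apply, ← sub_eq_add_neg, coeff_lderiv_iterate_sub,
    zsmul_eq_mul, mul_comm]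

end wronskian

theorem wronskian_lowest_coeff_general (A : Type*) [CommRing A] (k : ℕ)
    (m : Fin k → ℤ) (hm : StrictMono m) (f : Fin k → LaurentSeries A)
    (hlead : ∀ i, (f i).coeff (m i) = 1)
    (hlow : ∀ i, ∀ q < m i, (f i).coeff q = 0) :
    (∀ q < (∑ i, m i) - (k * (k - 1) / 2 : ℕ), (wronskian f).coeff q = 0) ∧
    (wronskian f).coeff ((∑ i, m i) - (k * (k - 1) / 2 : ℕ)) =
      ((∏ p ∈ Finset.univ.filter (fun p : Fin k × Fin k => p.1 < p.2),
        (m p.2 - m p.1) : ℤ) : A) ∧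
    (∀ (_ : Algebra ℚ A), Nontrivial A → wronskian f ≠ 0) := by
  have horder i : (m i : WithTop ℤ) ≤ (f i).orderTop := HahnSeries.le_orderTop_iff_forall.mpr
    fun q hq => hlow i q (WithTop.coe_lt_coe.mp hq)
  have hcoeff : (wronskian f).coeff ((∑ i, m i) - (k * (k - 1) / 2 : ℕ)) =
      ((∏ p ∈ univ.filter (fun p : Fin k × Fin k => p.1 < p.2), (m p.2 - m p.1) : ℤ) : A) := by
    rw [coeff_wronskian_sum_sub horder, prod_filter_fst_lt_snd (fun i j => m j - m i)]
    simp only [hlead, prod_const_one, one_mul]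
  refine ⟨fun q hq => HahnSeries.coeff_eq_zero_of_lt_orderTop
    ((WithTop.coe_lt_coe.mpr hq).trans_le (le_orderTop_wronskian horder)), hcoeff, ?_⟩
  intro _ _ hzero
  have : CharZero A := algebraRat.charZero A
  have hpos : 0 < ∏ p ∈ univ.filter (fun p : Fin k × Fin k => p.1 < p.2), (m p.2 - m p.1) :=
    prod_pos fun p hp => sub_pos.mpr (hm (mem_filter.mp hp).2)
  rw [hzero, HahnSeries.coeff_zero, eq_comm, Int.cast_eq_zero] at hcoeff
  exact hpos.ne' hcoeff

/-- Let `m_1 < ⋯ < m_k` be integers and `f_i ∈ A((x))` have coefficient `1` at `x^{m_i}` and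
vanishing coefficients below `x^{m_i}`. With `Q = m_1 + ⋯ + m_k − k(k−1)/2`, the Wronskian
`W(f_1,…,f_k)` has vanishing coefficients below `x^Q`, its coefficient at `x^Q` equals
`∏_{i<j} (m_j − m_i) · 1_A`, and it is nonzero whenever `A` is a nonzero `ℚ`-algebra. -/
theorem wronskian_lowest_coeff (A : Type*) [CommRing A] (k : ℕ) (hk : 1 ≤ k)
    (m : Fin k → ℤ) (hm : StrictMono m) (f : Fin k → LaurentSeries A)
    (hlead : ∀ i, (f i).coeff (m i) = 1)
    (hlow : ∀ i, ∀ q < m i, (f i).coeff q = 0) :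
    (∀ q < (∑ i, m i) - (k * (k - 1) / 2 : ℕ), (wronskian f).coeff q = 0) ∧
    (wronskian f).coeff ((∑ i, m i) - (k * (k - 1) / 2 : ℕ)) =
      ((∏ p ∈ Finset.univ.filter (fun p : Fin k × Fin k => p.1 < p.2),
        (m p.2 - m p.1) : ℤ) : A) ∧
    (∀ (_ : Algebra ℚ A), Nontrivial A → wronskian f ≠ 0) :=
  wronskian_lowest_coeff_general A k m hm f hlead hlow
end
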